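/- arXiv:2305.00362 — 2 statements merged into one kernel-verified Lean document; each statement's English description precedes it below -/
import Mathlib

section
/- For every real α, regret(λ̂, λ) ≤ max_{P ∈ Φ} (α λ̂ - λ)^T P - α c*(λ̂) + c*(λ), where c*(c) = max_{P∈Φ} c^T P over a nonempty compact set Φ and regret(λ̂, λ) = λ^T P*(λ) - λ^T P*(λ̂) with P*(λ̂) a maximizer of λ̂^T P. Consequently regret(λ̂, λ) ≤ inf_α { max_{P ∈ Φ} (α λ̂ - λ)^T P - α c*(λ̂) } + c*(λ). -/
/-! At the point `P*(λ̂) ∈ Φ` the linear function `(α • λ̂ - λ)ᵀ P` takes the value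
`α c*(λ̂) - λᵀ P*(λ̂)`, which is at most its maximum over `Φ`; rearranging gives the bound for
every `α`, hence for the infimum. -/

/-- Dot product on `Fin n → ℝ`. -/
def dotp {n : ℕ} (c P : Fin n → ℝ) : ℝ := ∑ i, c i * P i

open Matrix Set

lemma dotp_eq_dotProduct {n : ℕ} (c P : Fin n → ℝ) : dotp c P = c ⬝ᵥ P := rfl

lemma continuous_dotp {n : ℕ} (c : Fin n → ℝ) : Continuous (dotp c) :=
  continuous_const.dotProduct continuous_id

lemma dotp_smul_sub {n : ℕ} (α : ℝ) (a b P : Fin n → ℝ) :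
    dotp (α • a - b) P = α * dotp a P - dotp b P := by
  simp only [dotp_eq_dotProduct, sub_dotProduct, smul_dotProduct, smul_eq_mul]

lemma dotp_le_sSup_image_of_isCompact {n : ℕ} {Φ : Set (Fin n → ℝ)} (hΦ : IsCompact Φ)
    (c : Fin n → ℝ) {P : Fin n → ℝ} (hP : P ∈ Φ) : dotp c P ≤ sSup (dotp c '' Φ) :=
  le_csSup (hΦ.image (continuous_dotp c)).bddAbove (mem_image_of_mem _ hP)

theorem regret_upper_bound_general
    {n : ℕ} (Φ : Set (Fin n → ℝ)) (hcomp : IsCompact Φ)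
    (lamh lam : Fin n → ℝ)
    (Plam : Fin n → ℝ)
    (Plamh : Fin n → ℝ) (hPlamh : Plamh ∈ Φ)
    (cstarlam cstarlamh : ℝ)
    (hcl : cstarlam = dotp lam Plam) (hclh : cstarlamh = dotp lamh Plamh) :
    (∀ α : ℝ,
      dotp lam Plam - dotp lam Plamh ≤
        sSup ((fun P => dotp (α • lamh - lam) P) '' Φ) - α * cstarlamh + cstarlam) ∧
    dotp lam Plam - dotp lam Plamh ≤
      (⨅ α : ℝ, (sSup ((fun P => dotp (α • lamh - lam) P) '' Φ) - α * cstarlamh))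
        + cstarlam := by
  have hbound : ∀ α : ℝ, dotp lam Plam - dotp lam Plamh ≤
      sSup ((fun P => dotp (α • lamh - lam) P) '' Φ) - α * cstarlamh + cstarlam := by
    intro α
    have hle : dotp (α • lamh - lam) Plamh ≤ sSup ((fun P => dotp (α • lamh - lam) P) '' Φ) :=
      dotp_le_sSup_image_of_isCompact hcomp (α • lamh - lam) hPlamh
    rw [dotp_smul_sub] at hle
    subst hcl hclh
    linarith
  refine ⟨hbound, ?_⟩
  have hinf : dotp lam Plam - dotp lam Plamh - cstarlam ≤
      ⨅ α : ℝ, (sSup ((fun P => dotp (α • lamh - lam) P) '' Φ) - α * cstarlamh) :=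
    le_ciInf fun α => by linarith [hbound α]
  linarith

theorem regret_upper_bound
    {n : ℕ} (Φ : Set (Fin n → ℝ)) (hcomp : IsCompact Φ) (hne : Φ.Nonempty)
    (lamh lam : Fin n → ℝ)
    (Plam : Fin n → ℝ) (hPlam : Plam ∈ Φ)
    (hPlammax : ∀ P ∈ Φ, dotp lam P ≤ dotp lam Plam)
    (Plamh : Fin n → ℝ) (hPlamh : Plamh ∈ Φ)
    (hPlamhmax : ∀ P ∈ Φ, dotp lamh P ≤ dotp lamh Plamh)
    (cstarlam cstarlamh : ℝ)
    (hcl : cstarlam = dotp lam Plam) (hclh : cstarlamh = dotp lamh Plamh) :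
    (∀ α : ℝ,
      dotp lam Plam - dotp lam Plamh ≤
        sSup ((fun P => dotp (α • lamh - lam) P) '' Φ) - α * cstarlamh + cstarlam) ∧
    dotp lam Plam - dotp lam Plamh ≤
      (⨅ α : ℝ, (sSup ((fun P => dotp (α • lamh - lam) P) '' Φ) - α * cstarlamh))
        + cstarlam :=
  regret_upper_bound_general Φ hcomp lamh lam Plam Plamh hPlamh cstarlam cstarlamh hcl hclh
end

section
/- For two predicted prices with equal prediction error: there exist a compact polytope Φ ⊂ R², a true price λ ∈ R², and predictions λ̂₁, λ̂₂ ∈ R² with ‖λ̂₁ - λ‖ = ‖λ̂₂ - λ‖, such that regret(λ̂₁, λ) = 0 but regret(λ̂₂, λ) > 0; i.e., equal prediction errors can produce different decision errors. -/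
/-- Dot product on `EuclideanSpace ℝ (Fin 2)`. -/
def dotp2 (c P : EuclideanSpace ℝ (Fin 2)) : ℝ := ∑ i, c i * P i

/-!
Take for `Φ` the segment from `0` to `v = (1, 1)` and `λ = v`. A linear objective that increases
along the segment is maximized on it only at `v`, one that decreases only at `0`. The predictions
`(3, 0)` and `(-1, 0)` are mirror images in the line `x = 1`, which contains `λ`, so they are
equally far from `λ`; the first still increases along the segment (regret `0`), the second
decreases (regret `⟪λ, v⟫ = 2`).
-/

open RealInnerProductSpace

theorem dotp2_eq_inner (c P : EuclideanSpace ℝ (Fin 2)) : dotp2 c P = ⟪c, P⟫ := by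
  simp [dotp2, PiLp.inner_apply, mul_comm]

theorem eq_right_of_isMaxOn_segment {𝕜 E : Type*} [Field 𝕜] [LinearOrder 𝕜]
    [IsStrictOrderedRing 𝕜] [AddCommGroup E] [Module 𝕜 E] (f : E →ₗ[𝕜] 𝕜) {a b P : E}
    (hab : f a < f b) (hP : P ∈ segment 𝕜 a b) (hmax : IsMaxOn f (segment 𝕜 a b) P) :
    P = b := by
  obtain ⟨s, t, hs, -, hst, rfl⟩ := hP
  have hb : f b ≤ s * f a + t * f b := by
    simpa using isMaxOn_iff.1 hmax b (right_mem_segment 𝕜 a b)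
  have hs' : s * (f b - f a) ≤ 0 := by linear_combination hb + f b * hst
  obtain rfl : s = 0 := le_antisymm (nonpos_of_mul_nonpos_left hs' (sub_pos.2 hab)) hs
  obtain rfl : t = 1 := by simpa using hst
  simp

theorem equal_prediction_error_different_regret :
    ∃ (Φ : Set (EuclideanSpace ℝ (Fin 2)))
      (lam lamh₁ lamh₂ : EuclideanSpace ℝ (Fin 2)),
      IsCompact Φ ∧ Φ.Nonempty ∧ Convex ℝ Φ ∧
      ‖lamh₁ - lam‖ = ‖lamh₂ - lam‖ ∧
      (∀ Plam ∈ Φ, (∀ P ∈ Φ, dotp2 lam P ≤ dotp2 lam Plam) →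
        (∀ P1 ∈ Φ, (∀ P ∈ Φ, dotp2 lamh₁ P ≤ dotp2 lamh₁ P1) →
          dotp2 lam Plam - dotp2 lam P1 = 0) ∧
        (∀ P2 ∈ Φ, (∀ P ∈ Φ, dotp2 lamh₂ P ≤ dotp2 lamh₂ P2) →
          0 < dotp2 lam Plam - dotp2 lam P2)) := by
  set v : EuclideanSpace ℝ (Fin 2) := !₂[1, 1] with hv
  refine ⟨convexHull ℝ {0, v}, v, !₂[3, 0], !₂[-1, 0], (Set.toFinite _).isCompact_convexHull ℝ,
    ⟨0, subset_convexHull ℝ _ (Set.mem_insert 0 _)⟩, convex_convexHull ℝ _, ?_, ?_⟩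
  · simp [hv, EuclideanSpace.norm_eq, Fin.sum_univ_two]
    norm_num
  intro Plam hPlam hmax
  simp only [dotp2_eq_inner, convexHull_pair] at hPlam hmax ⊢
  obtain rfl : Plam = v := eq_right_of_isMaxOn_segment (innerₗ _ v)
    (by simp [hv]) hPlam (isMaxOn_iff.2 hmax)
  refine ⟨fun P1 hP1 hmax1 => ?_, fun P2 hP2 hmax2 => ?_⟩
  · rw [eq_right_of_isMaxOn_segment (innerₗ _ !₂[3, 0])
      (by simp [hv, PiLp.inner_apply, Fin.sum_univ_two]) hP1 (isMaxOn_iff.2 hmax1), sub_self]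
  · rw [segment_symm] at hP2 hmax2
    rw [eq_right_of_isMaxOn_segment (innerₗ _ !₂[-1, 0])
      (by simp [hv, PiLp.inner_apply, Fin.sum_univ_two]) hP2 (isMaxOn_iff.2 hmax2)]
    simp [hv]
end
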